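/- arXiv:0807.5094 — 8 statements merged into one kernel-verified Lean document; each statement's English description precedes it below -/
import Mathlib

section
/- If T : M_{n,m}(F) → M_{n,m}(F) is a linear operator that strongly preserves gw-majorization, then T is invertible. -/
open Matrix

/-- R is g-row stochastic: Re = e. -/
def GRowStochastic {n : ℕ} {𝕜 : Type*} [RCLike 𝕜] (R : Matrix (Fin n) (Fin n) 𝕜) : Prop :=
  R *ᵥ (1 : Fin n → 𝕜) = 1

/-- gw-majorization on matrices: X ≻_gw Y iff Y = RX for some g-row stochastic R. -/
def GwMaj {n m : ℕ} {𝕜 : Type*} [RCLike 𝕜] (X Y : Matrix (Fin n) (Fin m) 𝕜) : Prop :=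
  ∃ R : Matrix (Fin n) (Fin n) 𝕜, GRowStochastic R ∧ Y = R * X

section GwMaj

variable {n m : ℕ} {𝕜 : Type*} [RCLike 𝕜]

theorem gRowStochastic_one : GRowStochastic (1 : Matrix (Fin n) (Fin n) 𝕜) :=
  one_mulVec _

theorem gwMaj_refl (X : Matrix (Fin n) (Fin m) 𝕜) : GwMaj X X :=
  ⟨1, gRowStochastic_one, (Matrix.one_mul X).symm⟩

theorem gwMaj_zero_left_iff {Y : Matrix (Fin n) (Fin m) 𝕜} : GwMaj 0 Y ↔ Y = 0 := by
  constructor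
  · rintro ⟨R, -, rfl⟩
    exact Matrix.mul_zero R
  · rintro rfl
    exact gwMaj_refl 0

end GwMaj

theorem stmt_0 {n m : ℕ} {𝕜 : Type*} [RCLike 𝕜]
    (T : Matrix (Fin n) (Fin m) 𝕜 →ₗ[𝕜] Matrix (Fin n) (Fin m) 𝕜)
    (hT : ∀ X Y, GwMaj X Y ↔ GwMaj (T X) (T Y)) :
    Function.Bijective T := by
  have hinj : Function.Injective T := by
    refine (injective_iff_map_eq_zero T).mpr fun X hX => ?_
    have hmaj : GwMaj (T 0) (T X) := by
      rw [map_zero, hX]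
      exact gwMaj_refl 0
    exact gwMaj_zero_left_iff.mp ((hT 0 X).mpr hmaj)
  exact ⟨hinj, LinearMap.injective_iff_surjective.mp hinj⟩
end

section
/- For x ∈ F^n, the following are equivalent: (1) x ≻_gw y for every y ∈ F^n; (2) x ∉ span{e}. -/
/-!
A g-row stochastic `R` fixes every constant vector, so a constant `x` only reaches `y = x`.
If `x j ≠ x k`, every scalar `y i` is an affine combination `t i * x j + (1 - t i) * x k`,
and the matrix with rows `t i • eⱼ + (1 - t i) • eₖ` has row sums `1` and maps `x` to `y`.
-/

open Matrix

/-- gw-majorization on vectors. -/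
def VGwMaj {n : ℕ} {𝕜 : Type*} [RCLike 𝕜] (x y : Fin n → 𝕜) : Prop :=
  ∃ R : Matrix (Fin n) (Fin n) 𝕜, GRowStochastic R ∧ y = R *ᵥ x

section PairMix

variable {ι R : Type*} [Fintype ι] [DecidableEq ι] [CommRing R]

def Matrix.pairMix (j k : ι) (t : ι → R) : Matrix ι ι R :=
  Matrix.of fun i => t i • Pi.single j 1 + (1 - t i) • Pi.single k 1

theorem Matrix.pairMix_mulVec_apply (j k : ι) (t v : ι → R) (i : ι) :
    (pairMix j k t *ᵥ v) i = t i * v j + (1 - t i) * v k := by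
  simp only [pairMix, mulVec, of_apply, add_dotProduct, smul_dotProduct, single_one_dotProduct,
    smul_eq_mul]

theorem Matrix.pairMix_mulVec_one (j k : ι) (t : ι → R) : pairMix j k t *ᵥ 1 = 1 := by
  ext i
  simp [pairMix_mulVec_apply]

end PairMix

theorem exists_apply_ne_of_notMem_span_one {ι R : Type*} [Nonempty ι] [Semiring R]
    {x : ι → R} (hx : x ∉ Submodule.span R {(1 : ι → R)}) : ∃ j k, x j ≠ x k := by
  by_contra! hconst
  obtain ⟨k⟩ := ‹Nonempty ι›
  exact hx (Submodule.mem_span_singleton.mpr ⟨x k, funext fun i => by simp [hconst i k]⟩)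

section GRowStochastic

variable {n : ℕ} {𝕜 : Type*} [RCLike 𝕜]

theorem GRowStochastic.mulVec_eq_self_of_mem_span_one {R : Matrix (Fin n) (Fin n) 𝕜}
    (hR : GRowStochastic R) {x : Fin n → 𝕜} (hx : x ∈ Submodule.span 𝕜 {(1 : Fin n → 𝕜)}) :
    R *ᵥ x = x := by
  obtain ⟨c, rfl⟩ := Submodule.mem_span_singleton.mp hx
  rw [mulVec_smul, hR]

theorem vGwMaj_of_apply_ne {x : Fin n → 𝕜} {j k : Fin n} (hjk : x j ≠ x k) (y : Fin n → 𝕜) :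
    VGwMaj x y := by
  have hd : x j - x k ≠ 0 := sub_ne_zero.mpr hjk
  refine ⟨pairMix j k fun i => (y i - x k) / (x j - x k), pairMix_mulVec_one j k _, ?_⟩
  ext i
  rw [pairMix_mulVec_apply]
  field_simp
  ring

end GRowStochastic

theorem stmt_2 {n : ℕ} (hn : 2 ≤ n) {𝕜 : Type*} [RCLike 𝕜] (x : Fin n → 𝕜) :
    (∀ y : Fin n → 𝕜, VGwMaj x y) ↔ x ∉ Submodule.span 𝕜 {(1 : Fin n → 𝕜)} := by
  have : Nonempty (Fin n) := ⟨⟨0, by omega⟩⟩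
  refine ⟨fun h hx => ?_, fun hx y => ?_⟩
  · obtain ⟨i⟩ := this
    obtain ⟨R, hR, hy⟩ := h (x + Pi.single i 1)
    rw [hR.mulVec_eq_self_of_mem_span_one hx] at hy
    simpa using congrFun hy i
  · obtain ⟨j, k, hjk⟩ := exists_apply_ne_of_notMem_span_one hx
    exact vGwMaj_of_apply_ne hjk y
end

section
/- Let T : F^n → F^n be a nonzero linear operator. Then T preserves gw-majorization if and only if x ∉ span{e} implies T(x) ∉ span{e}. -/
/-!
A vector `x` outside `span {e}` can be sent to any `y` by a matrix fixing `e`: pick a functional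
`f` with `f e = 0` and `f x ≠ 0`, and take the rank-one perturbation `R = I + (y - x) f / f x` of
the identity. Multiples of `e`, on the other hand, are fixed by every such `R`. Hence `x ≻_gw y`
holds iff `x ∉ span {e}` or `y = x`, and `T` preserves this relation iff it keeps vectors
outside `span {e}` outside: if `T x ∈ span {e}` for some `x ∉ span {e}`, then `T y = T x` for
every `y`, which forces `T = 0`.
-/

open Matrix

section

variable {n : ℕ} {𝕜 : Type*} [RCLike 𝕜]

theorem vGwMaj_iff_exists_linearMap {x y : Fin n → 𝕜} :
    VGwMaj x y ↔ ∃ L : (Fin n → 𝕜) →ₗ[𝕜] (Fin n → 𝕜), L 1 = 1 ∧ L x = y := by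
  constructor
  · rintro ⟨R, hR, rfl⟩
    exact ⟨R.mulVecLin, hR, rfl⟩
  · rintro ⟨L, hL1, rfl⟩
    refine ⟨L.toMatrix', ?_, ?_⟩
    · rw [GRowStochastic, LinearMap.toMatrix'_mulVec, hL1]
    · rw [LinearMap.toMatrix'_mulVec]

theorem vGwMaj_of_notMem_span {x : Fin n → 𝕜} (hx : x ∉ Submodule.span 𝕜 {1})
    (y : Fin n → 𝕜) : VGwMaj x y := by
  obtain ⟨f, hfx, hf⟩ := Submodule.exists_dual_map_eq_bot_of_notMem hx inferInstance
  have hf1 : f 1 = 0 :=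
    (Submodule.mem_bot 𝕜).mp <| hf ▸ Submodule.mem_map_of_mem <|
      Submodule.mem_span_singleton_self 1
  refine vGwMaj_iff_exists_linearMap.mpr
    ⟨LinearMap.id + LinearMap.smulRight ((f x)⁻¹ • f) (y - x), ?_, ?_⟩
  · simp [hf1]
  · simp [inv_mul_cancel₀ hfx]

theorem VGwMaj.eq_of_mem_span {x y : Fin n → 𝕜} (h : VGwMaj x y)
    (hx : x ∈ Submodule.span 𝕜 {1}) : y = x := by
  obtain ⟨c, rfl⟩ := Submodule.mem_span_singleton.mp hx
  obtain ⟨R, hR, rfl⟩ := h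
  rw [Matrix.mulVec_smul, hR]

theorem vGwMaj_iff {x y : Fin n → 𝕜} :
    VGwMaj x y ↔ x ∉ Submodule.span 𝕜 {1} ∨ y = x := by
  refine ⟨fun h => or_iff_not_imp_left.mpr fun hx => h.eq_of_mem_span (not_not.mp hx), ?_⟩
  rintro (hx | rfl)
  · exact vGwMaj_of_notMem_span hx y
  · exact ⟨1, Matrix.one_mulVec 1, (Matrix.one_mulVec y).symm⟩

end

theorem stmt_3_general {n : ℕ} {𝕜 : Type*} [RCLike 𝕜]
    (T : (Fin n → 𝕜) →ₗ[𝕜] (Fin n → 𝕜)) (hT : T ≠ 0) :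
    (∀ x y, VGwMaj x y → VGwMaj (T x) (T y)) ↔
      (∀ x : Fin n → 𝕜, x ∉ Submodule.span 𝕜 {(1 : Fin n → 𝕜)} →
        T x ∉ Submodule.span 𝕜 {(1 : Fin n → 𝕜)}) := by
  simp only [vGwMaj_iff]
  constructor
  · intro hpres x hx hTx
    have hconst : ∀ y, T y = T x := fun y =>
      (hpres x y (Or.inl hx)).resolve_left (not_not.mpr hTx)
    exact hT (LinearMap.ext fun y => by rw [hconst y, ← hconst 0, map_zero, LinearMap.zero_apply])
  · rintro h x y (hx | rfl)
    · exact Or.inl (h x hx)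
    · exact Or.inr rfl

theorem stmt_3 {n : ℕ} (hn : 2 ≤ n) {𝕜 : Type*} [RCLike 𝕜]
    (T : (Fin n → 𝕜) →ₗ[𝕜] (Fin n → 𝕜)) (hT : T ≠ 0) :
    (∀ x y, VGwMaj x y → VGwMaj (T x) (T y)) ↔
      (∀ x : Fin n → 𝕜, x ∉ Submodule.span 𝕜 {(1 : Fin n → 𝕜)} →
        T x ∉ Submodule.span 𝕜 {(1 : Fin n → 𝕜)}) :=
  stmt_3_general T hT
end

section
/- A linear operator T : F^n → F^n preserves gw-majorization if and only if T(x) = αRx for some R ∈ M_n(F) and α ∈ F such that either ker(R) = span{e} and e ∉ Im(R), or R is an invertible g-row stochastic matrix. -/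
/-!
A nonconstant `x` can be sent to any `y` by a g-row stochastic matrix of rank at most two, so
`x ≻_gw y` holds iff `x` is nonconstant or `y = x`. Hence a linear `T` preserves `≻_gw` iff
`T = 0` or `T⁻¹(span e) ⊆ span e`. In the latter case either `T e = 0`, and then
`ker T = span e` and `e ∉ im T`, or `T` is injective and `T e = α e` with `α ≠ 0`, so that
`α⁻¹ T` is invertible and g-row stochastic.
-/

open Matrix

namespace LinearMap

section Preserves

variable {R V : Type*} [Semiring R] [AddCommMonoid V] [Module R V]

theorem preserves_eq_of_mem_iff (L : Submodule R V) (T : V →ₗ[R] V) :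
    (∀ x y, (x ∈ L → y = x) → T x ∈ L → T y = T x) ↔ T = 0 ∨ L.comap T ≤ L := by
  constructor
  · intro hT
    by_contra! h
    obtain ⟨hT0, hL⟩ := h
    obtain ⟨x, hTx, hx⟩ := Set.not_subset.mp hL
    have hconst : ∀ y, T y = T x := fun y => hT x y (absurd · hx) hTx
    exact hT0 (ext fun y => by rw [zero_apply, hconst y, ← hconst 0, map_zero])
  · rintro (rfl | hL) x y hxy hTx
    · simp
    · rw [hxy (hL hTx)]

end Preserves

variable {K V : Type*} [Field K] [AddCommGroup V] [Module K V] {e : V} {T : V →ₗ[K] V}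

theorem ker_eq_span_and_notMem_range_of_comap_le (h : (K ∙ e).comap T ≤ K ∙ e) (he : e ≠ 0)
    (hTe : T e = 0) : ker T = K ∙ e ∧ e ∉ range T := by
  refine ⟨le_antisymm (fun v hv => h (by simp [mem_ker.mp hv])) ?_, ?_⟩
  · exact (Submodule.span_singleton_le_iff_mem _ _).mpr hTe
  · rintro ⟨v, hv⟩
    obtain ⟨c, rfl⟩ := Submodule.mem_span_singleton.mp (@h v (by simp [hv]))
    rw [map_smul, hTe, smul_zero] at hv
    exact he hv.symm

theorem injective_and_exists_smul_eq_of_comap_le [FiniteDimensional K V]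
    (h : (K ∙ e).comap T ≤ K ∙ e) (hTe : T e ≠ 0) :
    Function.Injective T ∧ ∃ c : K, c ≠ 0 ∧ T e = c • e := by
  have hinj : Function.Injective T := by
    refine (injective_iff_map_eq_zero T).mpr fun v hv => ?_
    obtain ⟨a, rfl⟩ := Submodule.mem_span_singleton.mp (@h v (by simp [hv]))
    rw [map_smul, smul_eq_zero] at hv
    simp [hv.resolve_right hTe]
  obtain ⟨v, hv⟩ := injective_iff_surjective.mp hinj e
  obtain ⟨c, rfl⟩ := Submodule.mem_span_singleton.mp (@h v (by simp [hv]))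
  have hc : c ≠ 0 := by
    rintro rfl
    rw [zero_smul, map_zero] at hv
    exact hTe (by rw [← hv, map_zero])
  exact ⟨hinj, c⁻¹, inv_ne_zero hc, (eq_inv_smul_iff₀ hc).mpr (by rwa [map_smul] at hv)⟩

theorem comap_span_le_of_ker_eq (hker : ker T = K ∙ e) (hrange : e ∉ range T) :
    (K ∙ e).comap T ≤ K ∙ e := by
  intro x hx
  obtain ⟨d, hd⟩ := Submodule.mem_span_singleton.mp hx
  rcases eq_or_ne d 0 with rfl | hd0
  · rw [← hker, mem_ker, ← hd, zero_smul]
  · exact absurd ⟨d⁻¹ • x, by rw [map_smul, ← hd, smul_smul, inv_mul_cancel₀ hd0, one_smul]⟩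
      hrange

theorem comap_span_le_of_injective (hinj : Function.Injective T) (hTe : T e = e) :
    (K ∙ e).comap T ≤ K ∙ e := by
  intro x hx
  obtain ⟨d, hd⟩ := Submodule.mem_span_singleton.mp hx
  exact Submodule.mem_span_singleton.mpr ⟨d, hinj (by rw [map_smul, hTe, hd])⟩

theorem eq_zero_or_comap_span_le_iff [FiniteDimensional K V] (he : e ≠ 0) :
    T = 0 ∨ (K ∙ e).comap T ≤ K ∙ e ↔
      ∃ (α : K) (S : V →ₗ[K] V), T = α • S ∧
        ((ker S = K ∙ e ∧ e ∉ range S) ∨ (S e = e ∧ Function.Injective S)) := by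
  constructor
  · rintro (rfl | h)
    · exact ⟨0, id, (zero_smul K _).symm, Or.inr ⟨rfl, Function.injective_id⟩⟩
    by_cases hTe : T e = 0
    · exact ⟨1, T, (one_smul K T).symm,
        Or.inl (ker_eq_span_and_notMem_range_of_comap_le h he hTe)⟩
    obtain ⟨hinj, c, hc, hTc⟩ := injective_and_exists_smul_eq_of_comap_le h hTe
    refine ⟨c, c⁻¹ • T, by rw [smul_smul, mul_inv_cancel₀ hc, one_smul], Or.inr ⟨?_, ?_⟩⟩
    · rw [smul_apply, hTc, smul_smul, inv_mul_cancel₀ hc, one_smul]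
    · exact (smul_right_injective V (inv_ne_zero hc)).comp hinj
  · rintro ⟨α, S, rfl, hS⟩
    rcases eq_or_ne α 0 with rfl | hα
    · exact Or.inl (zero_smul K S)
    rw [Submodule.comap_smul S _ α hα]
    rcases hS with ⟨hker, hrange⟩ | ⟨hSe, hinj⟩
    · exact Or.inr (comap_span_le_of_ker_eq hker hrange)
    · exact Or.inr (comap_span_le_of_injective hinj hSe)

end LinearMap

theorem exists_ne_of_notMem_span_one {ι R : Type*} [Semiring R] {x : ι → R} (hx : x ∉ R ∙ 1) :
    ∃ i j, x i ≠ x j := by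
  by_contra! h
  apply hx
  rcases isEmpty_or_nonempty ι with hι | ⟨⟨i⟩⟩
  · exact Subsingleton.elim (0 : ι → R) x ▸ Submodule.zero_mem _
  · exact Submodule.mem_span_singleton.mpr ⟨x i, funext fun j => by simp [h i j]⟩

section GwMajorization

variable {n : ℕ} {𝕜 : Type*} [RCLike 𝕜]

theorem exists_gRowStochastic_mulVec_eq {x : Fin n → 𝕜} {i j : Fin n} (hij : x i ≠ x j)
    (y : Fin n → 𝕜) : ∃ R : Matrix (Fin n) (Fin n) 𝕜, GRowStochastic R ∧ R *ᵥ x = y := by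
  -- `R = (y - x j • 1) φᵀ + 1 (Pi.single j 1)ᵀ`, where `φ ⬝ᵥ x = 1` and `φ ⬝ᵥ 1 = 0`
  set φ : Fin n → 𝕜 := (x i - x j)⁻¹ • (Pi.single i 1 - Pi.single j 1)
  have hd : x i - x j ≠ 0 := sub_ne_zero.mpr hij
  unfold GRowStochastic
  refine ⟨vecMulVec (y - x j • 1) φ + vecMulVec 1 (Pi.single j 1), ?_, ?_⟩ <;>
    rw [add_mulVec, vecMulVec_mulVec, vecMulVec_mulVec] <;>
    simp [φ, op_smul_eq_smul, smul_dotProduct, sub_dotProduct, single_dotProduct, hd]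

theorem vgwMaj_iff {x y : Fin n → 𝕜} : VGwMaj x y ↔ (x ∈ 𝕜 ∙ 1 → y = x) := by
  constructor
  · rintro ⟨R, hR, rfl⟩ hx
    obtain ⟨c, rfl⟩ := Submodule.mem_span_singleton.mp hx
    rw [mulVec_smul, hR]
  · intro h
    by_cases hx : x ∈ 𝕜 ∙ 1
    · exact ⟨1, one_mulVec 1, by rw [h hx, one_mulVec]⟩
    · obtain ⟨i, j, hij⟩ := exists_ne_of_notMem_span_one hx
      obtain ⟨R, hR, hRx⟩ := exists_gRowStochastic_mulVec_eq hij y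
      exact ⟨R, hR, hRx.symm⟩

end GwMajorization

theorem stmt_4 {n : ℕ} (hn : 2 ≤ n) {𝕜 : Type*} [RCLike 𝕜]
    (T : (Fin n → 𝕜) →ₗ[𝕜] (Fin n → 𝕜)) :
    (∀ x y, VGwMaj x y → VGwMaj (T x) (T y)) ↔
      ∃ (α : 𝕜) (R : Matrix (Fin n) (Fin n) 𝕜),
        (∀ x, T x = α • (R *ᵥ x)) ∧
        ((LinearMap.ker R.mulVecLin = Submodule.span 𝕜 {(1 : Fin n → 𝕜)} ∧
            (1 : Fin n → 𝕜) ∉ LinearMap.range R.mulVecLin) ∨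
          (GRowStochastic R ∧ IsUnit R)) := by
  have he : (1 : Fin n → 𝕜) ≠ 0 := fun h => one_ne_zero (congrFun h ⟨0, by omega⟩)
  simp only [vgwMaj_iff]
  rw [LinearMap.preserves_eq_of_mem_iff, LinearMap.eq_zero_or_comap_span_le_iff he]
  refine exists_congr fun α => toLin'.surjective.exists.trans (exists_congr fun R => ?_)
  simp only [toLin'_apply', LinearMap.ext_iff, LinearMap.smul_apply, mulVecLin_apply,
    coe_mulVecLin, mulVec_injective_iff_isUnit, GRowStochastic]
end

section
/- Let A ∈ M_n(F) with ker(A) = span{e}. Then there exist x₀, y₀ ∈ F^n and a g-row stochastic matrix R₀ such that x₀ + A y₀ does not gw-majorize R₀ x₀ + A R₀ y₀. -/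
open Matrix

/-
If x + A y majorized R x + A (R y) for every x, y and every g-row stochastic R, then taking
x = -A y (so that the majorizing vector is 0, which only majorizes 0) would force A to commute
with every g-row stochastic matrix. Among these are the rank-one perturbations 1 + u wᵀ with
w ⊥ e, and commuting with all of them makes A a scalar matrix; since A e = 0 that scalar is 0,
so ker A is the whole space, which is not a line when n ≥ 2.
-/

lemma one_add_vecMulVec_mulVec {ι α : Type*} [Fintype ι] [DecidableEq ι] [CommSemiring α]
    (u w v : ι → α) : (1 + vecMulVec u w) *ᵥ v = v + (w ⬝ᵥ v) • u := by
  rw [add_mulVec, one_mulVec, vecMulVec_mulVec, op_smul_eq_smul]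

lemma Submodule.span_singleton_ne_top_of_two_le_finrank {K V : Type*} [Field K]
    [AddCommGroup V] [Module K V] (hV : 2 ≤ Module.finrank K V) (v : V) :
    Submodule.span K {v} ≠ ⊤ := by
  intro h
  have := finrank_span_le_card (R := K) ({v} : Set V)
  rw [h, finrank_top] at this
  simp only [Set.toFinset_singleton, Finset.card_singleton] at this
  omega

section

variable {n : ℕ} {𝕜 : Type*} [RCLike 𝕜]

lemma eq_zero_of_vgwMaj_zero {y : Fin n → 𝕜} (h : VGwMaj 0 y) : y = 0 := by
  obtain ⟨R, -, rfl⟩ := h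
  exact mulVec_zero R

lemma gRowStochastic_one_add_vecMulVec (u : Fin n → 𝕜) {w : Fin n → 𝕜} (hw : w ⬝ᵥ 1 = 0) :
    GRowStochastic (1 + vecMulVec u w) := by
  rw [GRowStochastic, one_add_vecMulVec_mulVec, hw, zero_smul, add_zero]

lemma mulVec_comm_of_forall_vgwMaj {A : Matrix (Fin n) (Fin n) 𝕜}
    (hA : ∀ (x y : Fin n → 𝕜) (R : Matrix (Fin n) (Fin n) 𝕜), GRowStochastic R →
      VGwMaj (x + A *ᵥ y) (R *ᵥ x + A *ᵥ (R *ᵥ y)))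
    {R : Matrix (Fin n) (Fin n) 𝕜} (hR : GRowStochastic R) (y : Fin n → 𝕜) :
    A *ᵥ (R *ᵥ y) = R *ᵥ (A *ᵥ y) := by
  have h := hA (-(A *ᵥ y)) y R hR
  rw [neg_add_cancel] at h
  replace h := eq_zero_of_vgwMaj_zero h
  rw [mulVec_neg] at h
  exact (neg_add_eq_zero.mp h).symm

lemma exists_mulVec_eq_smul_of_commute_gRowStochastic (hn : 2 ≤ n)
    {A : Matrix (Fin n) (Fin n) 𝕜}
    (hA : ∀ R : Matrix (Fin n) (Fin n) 𝕜, GRowStochastic R →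
      ∀ y, A *ᵥ (R *ᵥ y) = R *ᵥ (A *ᵥ y)) :
    ∃ c : 𝕜, ∀ u, A *ᵥ u = c • u := by
  set i₀ : Fin n := ⟨0, by omega⟩
  set i₁ : Fin n := ⟨1, by omega⟩
  have hi : i₀ ≠ i₁ := by simp [i₀, i₁, Fin.ext_iff]
  set w : Fin n → 𝕜 := Pi.single i₀ 1 - Pi.single i₁ 1
  have hw : w ⬝ᵥ 1 = 0 := by simp [w, sub_dotProduct]
  have hwe : w ⬝ᵥ Pi.single i₀ 1 = 1 := by simp [w, hi.symm]
  refine ⟨w ⬝ᵥ (A *ᵥ Pi.single i₀ 1), fun u => ?_⟩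
  have h := hA _ (gRowStochastic_one_add_vecMulVec u hw) (Pi.single i₀ 1)
  rwa [one_add_vecMulVec_mulVec, one_add_vecMulVec_mulVec, hwe, one_smul, mulVec_add,
    add_right_inj] at h

end

theorem stmt_5 {n : ℕ} (hn : 2 ≤ n) {𝕜 : Type*} [RCLike 𝕜]
    (A : Matrix (Fin n) (Fin n) 𝕜)
    (hker : LinearMap.ker A.mulVecLin = Submodule.span 𝕜 {(1 : Fin n → 𝕜)}) :
    ∃ (x₀ y₀ : Fin n → 𝕜) (R₀ : Matrix (Fin n) (Fin n) 𝕜), GRowStochastic R₀ ∧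
      ¬ VGwMaj (x₀ + A *ᵥ y₀) (R₀ *ᵥ x₀ + A *ᵥ (R₀ *ᵥ y₀)) := by
  by_contra! hmaj
  obtain ⟨c, hc⟩ := exists_mulVec_eq_smul_of_commute_gRowStochastic hn
    fun R hR => mulVec_comm_of_forall_vgwMaj hmaj hR
  have hA1 : A *ᵥ 1 = 0 := by
    have h1 : (1 : Fin n → 𝕜) ∈ LinearMap.ker A.mulVecLin :=
      hker ▸ Submodule.mem_span_singleton_self _
    simpa using h1
  have hc0 : c = 0 := by
    have h := congrFun ((hc 1).symm.trans hA1) ⟨0, by omega⟩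
    simpa using h
  refine Submodule.span_singleton_ne_top_of_two_le_finrank (by simpa using hn) (1 : Fin n → 𝕜)
    (hker.symm.trans ?_)
  ext u
  simp [hc, hc0]
end

section
/- If an invertible matrix A ∈ M_n(F) satisfies AR = RA for every g-row stochastic matrix R ∈ M_n(F), then A is a scalar multiple of the identity; if moreover A is itself g-row stochastic, then A = I. -/
/-!
The matrix `1 e_jᵀ`, all of whose rows are `e_jᵀ`, is g-row stochastic. Comparing the entries of
`A (1 e_jᵀ) = (1 e_jᵀ) A` shows that row `j` of `A` is `s_p e_jᵀ`, where `s_p` is the sum of row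
`p` of `A`, for every `p`. Hence `A` is diagonal with all diagonal entries equal to the common row
sum, which is `1` when `A` itself is g-row stochastic.
-/

open Matrix

namespace Matrix

variable {ι α : Type*} [Fintype ι] [DecidableEq ι] [Semiring α]

theorem vecMulVec_one_single_mulVec_one (j : ι) :
    vecMulVec (1 : ι → α) (Pi.single j 1) *ᵥ 1 = 1 := by
  ext p
  simp [mulVec, dotProduct, vecMulVec_apply]

theorem apply_eq_of_commute_vecMulVec_one_single {A : Matrix ι ι α} {j : ι}
    (h : A * vecMulVec 1 (Pi.single j 1) = vecMulVec 1 (Pi.single j 1) * A) (p q : ι) :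
    A j q = if q = j then (A *ᵥ 1) p else 0 := by
  rw [mul_vecMulVec, vecMulVec_mul, single_vecMul, one_smul] at h
  simpa [vecMulVec_apply, Pi.single_apply] using (congrFun₂ h p q).symm

theorem eq_smul_one_of_forall_commute {A : Matrix ι ι α}
    (h : ∀ R : Matrix ι ι α, R *ᵥ 1 = 1 → A * R = R * A) (p : ι) :
    A = (A *ᵥ 1) p • (1 : Matrix ι ι α) := by
  ext j q
  rw [apply_eq_of_commute_vecMulVec_one_single (h _ (vecMulVec_one_single_mulVec_one j)) p q,
    smul_apply, one_apply]
  split_ifs <;> simp_all [eq_comm]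

theorem exists_eq_smul_one_of_forall_commute {A : Matrix ι ι α}
    (h : ∀ R : Matrix ι ι α, R *ᵥ 1 = 1 → A * R = R * A) :
    ∃ c : α, A = c • (1 : Matrix ι ι α) := by
  rcases isEmpty_or_nonempty ι with _ | ⟨⟨p⟩⟩
  · exact ⟨0, Subsingleton.elim _ _⟩
  · exact ⟨_, eq_smul_one_of_forall_commute h p⟩

theorem eq_one_of_forall_commute_of_mulVec_one {A : Matrix ι ι α}
    (h : ∀ R : Matrix ι ι α, R *ᵥ 1 = 1 → A * R = R * A) (hA : A *ᵥ 1 = 1) : A = 1 := by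
  ext j q
  have hjq := congrFun₂ (eq_smul_one_of_forall_commute h j) j q
  rw [hA] at hjq
  simpa using hjq

end Matrix

theorem stmt_7_general {n : ℕ} {𝕜 : Type*} [RCLike 𝕜]
    (A : Matrix (Fin n) (Fin n) 𝕜)
    (hcomm : ∀ R : Matrix (Fin n) (Fin n) 𝕜, GRowStochastic R → A * R = R * A) :
    (∃ c : 𝕜, A = c • (1 : Matrix (Fin n) (Fin n) 𝕜)) ∧
      (GRowStochastic A → A = 1) :=
  ⟨exists_eq_smul_one_of_forall_commute hcomm, eq_one_of_forall_commute_of_mulVec_one hcomm⟩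

theorem stmt_7 {n : ℕ} (hn : 2 ≤ n) {𝕜 : Type*} [RCLike 𝕜]
    (A : Matrix (Fin n) (Fin n) 𝕜) (hAu : IsUnit A)
    (hcomm : ∀ R : Matrix (Fin n) (Fin n) 𝕜, GRowStochastic R → A * R = R * A) :
    (∃ c : 𝕜, A = c • (1 : Matrix (Fin n) (Fin n) 𝕜)) ∧
      (GRowStochastic A → A = 1) :=
  stmt_7_general A hcomm
end

section
/- Let x, y ∈ F^n with x having two distinct components x_k ≠ x_l. Then there exists a g-row stochastic matrix R with Rx = y; explicitly, R with entries r_{ik} = (y_i − x_l)/(x_k − x_l), r_{il} = (x_k − y_i)/(x_k − x_l), and r_{ij} = 0 otherwise, satisfies Re = e and Rx = y. -/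
open Matrix

theorem Matrix.of_ite_ite_mulVec {ι R : Type*} [Fintype ι] [DecidableEq ι]
    [NonUnitalNonAssocSemiring R] {k l : ι} (hkl : k ≠ l) (a b v : ι → R) :
    (Matrix.of fun i j => if j = k then a i else if j = l then b i else 0) *ᵥ v =
      fun i => a i * v k + b i * v l := by
  funext i
  simp only [mulVec, dotProduct, of_apply]
  rw [Finset.sum_eq_add_of_mem k l (Finset.mem_univ _) (Finset.mem_univ _) hkl]
  · simp [hkl.symm]
  · intro j _ hj
    simp [hj.1, hj.2]

theorem stmt_8_general {n : ℕ} {𝕜 : Type*} [RCLike 𝕜]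
    (x y : Fin n → 𝕜) (k l : Fin n) (hkl : x k ≠ x l) :
    GRowStochastic (Matrix.of fun i j =>
        if j = k then (y i - x l) / (x k - x l)
        else if j = l then (x k - y i) / (x k - x l) else (0 : 𝕜)) ∧
      (Matrix.of fun i j =>
        if j = k then (y i - x l) / (x k - x l)
        else if j = l then (x k - y i) / (x k - x l) else (0 : 𝕜)) *ᵥ x = y := by
  have hk : k ≠ l := fun h => hkl (congrArg x h)
  have hd : x k - x l ≠ 0 := sub_ne_zero.mpr hkl
  unfold GRowStochastic
  rw [of_ite_ite_mulVec hk, of_ite_ite_mulVec hk]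
  constructor
  · funext i
    simp only [Pi.one_apply]
    field_simp
    ring
  · funext i
    field_simp
    ring

theorem stmt_8 {n : ℕ} (hn : 2 ≤ n) {𝕜 : Type*} [RCLike 𝕜]
    (x y : Fin n → 𝕜) (k l : Fin n) (hkl : x k ≠ x l) :
    GRowStochastic (Matrix.of fun i j =>
        if j = k then (y i - x l) / (x k - x l)
        else if j = l then (x k - y i) / (x k - x l) else (0 : 𝕜)) ∧
      (Matrix.of fun i j =>
        if j = k then (y i - x l) / (x k - x l)
        else if j = l then (x k - y i) / (x k - x l) else (0 : 𝕜)) *ᵥ x = y :=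
  stmt_8_general x y k l hkl
end

section
/- Let X, Y ∈ M_{n,m}(F), let A, B ∈ M_n(F) be invertible g-row stochastic matrices, C ∈ M_m(F) invertible, and α, β ∈ F with α ≠ 0. Then X ≻_gw Y if and only if AX ≻_gw BY. -/
open Matrix

/-! Multiplying by an invertible g-row stochastic matrix keeps a matrix in its class for the
preorder `≻_gw`, since the inverse is again g-row stochastic; the equivalence then follows
from transitivity. -/

section

variable {n m : ℕ} {𝕜 : Type*} [RCLike 𝕜]

namespace GRowStochastic

theorem mul {P Q : Matrix (Fin n) (Fin n) 𝕜} (hP : GRowStochastic P) (hQ : GRowStochastic Q) :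
    GRowStochastic (P * Q) := by
  rw [GRowStochastic, ← mulVec_mulVec, hQ, hP]

theorem inv {P : Matrix (Fin n) (Fin n) 𝕜} (hP : GRowStochastic P) (hPu : IsUnit P) :
    GRowStochastic P⁻¹ := by
  rw [GRowStochastic]
  conv_lhs => rw [← hP]
  rw [mulVec_mulVec, nonsing_inv_mul _ ((isUnit_iff_isUnit_det P).mp hPu), one_mulVec]

end GRowStochastic

namespace GwMaj

theorem trans {X Y Z : Matrix (Fin n) (Fin m) 𝕜} (hXY : GwMaj X Y) (hYZ : GwMaj Y Z) :
    GwMaj X Z := by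
  obtain ⟨R, hR, rfl⟩ := hXY
  obtain ⟨S, hS, rfl⟩ := hYZ
  exact ⟨S * R, hS.mul hR, (Matrix.mul_assoc S R X).symm⟩

theorem mul_left {R : Matrix (Fin n) (Fin n) 𝕜} (hR : GRowStochastic R)
    (X : Matrix (Fin n) (Fin m) 𝕜) : GwMaj X (R * X) :=
  ⟨R, hR, rfl⟩

theorem of_mul_left {A : Matrix (Fin n) (Fin n) 𝕜} (hA : GRowStochastic A) (hAu : IsUnit A)
    (X : Matrix (Fin n) (Fin m) 𝕜) : GwMaj (A * X) X := by
  have h := mul_left (hA.inv hAu) (A * X)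
  rwa [← Matrix.mul_assoc, nonsing_inv_mul _ ((isUnit_iff_isUnit_det A).mp hAu),
    Matrix.one_mul] at h

end GwMaj

end

theorem stmt_9_general {n m : ℕ} {𝕜 : Type*} [RCLike 𝕜]
    (X Y : Matrix (Fin n) (Fin m) 𝕜)
    (A B : Matrix (Fin n) (Fin n) 𝕜)
    (hA : GRowStochastic A) (hAu : IsUnit A)
    (hB : GRowStochastic B) (hBu : IsUnit B) :
    GwMaj X Y ↔ GwMaj (A * X) (B * Y) :=
  ⟨fun h => ((GwMaj.of_mul_left hA hAu X).trans h).trans (GwMaj.mul_left hB Y),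
    fun h => ((GwMaj.mul_left hA X).trans h).trans (GwMaj.of_mul_left hB hBu Y)⟩

theorem stmt_9 {n m : ℕ} {𝕜 : Type*} [RCLike 𝕜]
    (X Y : Matrix (Fin n) (Fin m) 𝕜)
    (A B : Matrix (Fin n) (Fin n) 𝕜)
    (hA : GRowStochastic A) (hAu : IsUnit A)
    (hB : GRowStochastic B) (hBu : IsUnit B)
    (C : Matrix (Fin m) (Fin m) 𝕜) (hCu : IsUnit C)
    (α β : 𝕜) (hα : α ≠ 0) :
    GwMaj X Y ↔ GwMaj (A * X) (B * Y) :=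
  stmt_9_general X Y A B hA hAu hB hBu
end
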